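/- In an algebra containing elements a, b satisfying a₁ a₂ = R₂₁ a₂ a₁, a₁ b₂ = R₂₁ b₂ R'₁₂ a₁, the reflection equation b₁ R'₂₁ b₂ R̄₁₂ = R₂₁⁻¹ b₂ R'₁₂ b₁ R̄₂₁ (equivalently R₁₂ b₁ R'₂₁ b₂ = b₂ R'₁₂ b₁ R̄₂₁), and the Yang–Baxter/unitarity conditions for R, the elements ã(k) := ½(a(k) + b(k) a(−k)) satisfy the exchange relation ã₁(k₁) ã₂(k₂) = R₂₁(k₂,k₁) ã₂(k₂) ã₁(k₁). -/

import Mathlib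

open Matrix

/-- Operators on the tensor product of two auxiliary spaces. -/
abbrev TwoLeg (N : ℕ) (α : Type*) := Matrix (Fin N × Fin N) (Fin N × Fin N) α

/-- Conjugation by the flip operator: `flipM M = P ∘ M ∘ P`. -/
def flipM {N : ℕ} {α : Type*} (M : TwoLeg N α) : TwoLeg N α :=
  Matrix.of fun p q => M (p.2, p.1) (q.2, q.1)

/-- Embedding of an `N×N` matrix into auxiliary space 1: `M ↦ M ⊗ I`. -/
def leg1 {N : ℕ} {α : Type*} [MulZeroOneClass α] (M : Matrix (Fin N) (Fin N) α) :
    TwoLeg N α :=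
  Matrix.of fun p q => if p.2 = q.2 then M p.1 q.1 else 0

/-- Embedding of an `N×N` matrix into auxiliary space 2: `M ↦ I ⊗ M`. -/
def leg2 {N : ℕ} {α : Type*} [MulZeroOneClass α] (M : Matrix (Fin N) (Fin N) α) :
    TwoLeg N α :=
  Matrix.of fun p q => if p.1 = q.1 then M p.2 q.2 else 0

/-- Map a complex matrix to a matrix over the algebra `A`. -/
def cmap {N : ℕ} (A : Type*) [Ring A] [Algebra ℂ A] (M : TwoLeg N ℂ) : TwoLeg N A :=
  M.map (algebraMap ℂ A)

/-- The matrix of reflection generators `b(k) = (bᵢⱼ(k))`. -/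
def bmat {N : ℕ} {A : Type*} (b : Fin N → Fin N → ℝ → A) (k : ℝ) :
    Matrix (Fin N) (Fin N) A :=
  Matrix.of fun i j => b i j k

/-- The boundary generators `ã(k) = ½(a(k) + b(k) a(−k))`. -/
noncomputable def tilA {N : ℕ} {A : Type*} [Ring A] [Algebra ℂ A]
    (a : Fin N → ℝ → A) (b : Fin N → Fin N → ℝ → A) (i : Fin N) (k : ℝ) : A :=
  ((2 : ℂ)⁻¹) • (a i k + ∑ j : Fin N, b i j k * a j (-k))

/-!
Write `α(k)` for the row vector `a(k)` and `β(k) = b(k) α(−k)`, so that `2ã = α + β`. The exchange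
relation `u₁ v₂ = R₂₁ v₂ u₁` is additive in `u` and in `v`, so it suffices to check it on the four
pairs `(α, α)`, `(α, β)`, `(β, α)`, `(β, β)`. The first is the hypothesis on `a`. In the mixed
pairs `b` is moved past `a` by the relation `a₁ b₂ = R₂₁ b₂ R'₁₂ a₁`, and the `R`-matrices this
produces cancel in pairs by unitarity. For `(β, β)` the same moves turn both sides into
`b₁ R'₂₁ b₂` resp. `R₂₁ b₂ R'₁₂ b₁ R̄₂₁` applied to `α₂(−k₂) α₁(−k₁)`, and these agree by the
reflection equation.
-/

theorem sum_comm_innermost {ι κ ν μ β : Type*} [Fintype ι] [Fintype κ] [Fintype ν] [Fintype μ]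
    [AddCommMonoid β] (f : ι → κ → ν → μ → β) :
    ∑ i, ∑ k, ∑ l, ∑ m, f i k l m = ∑ k, ∑ l, ∑ m, ∑ i, f i k l m := by
  rw [Finset.sum_comm]
  refine Finset.sum_congr rfl fun _ _ => ?_
  rw [Finset.sum_comm]
  exact Finset.sum_congr rfl fun _ _ => Finset.sum_comm

section LegProducts

variable {N : ℕ} {A : Type*} [Ring A]

def legMul (u v : Fin N → A) : Fin N × Fin N → A := fun p => u p.1 * v p.2

def legMulRev (u v : Fin N → A) : Fin N × Fin N → A := fun p => v p.2 * u p.1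

/-- The exchange relation `u₁ v₂ = M v₂ u₁`. -/
def IsExchange (M : TwoLeg N A) (u v : Fin N → A) : Prop :=
  legMul u v = M *ᵥ legMulRev u v

namespace IsExchange

variable {M : TwoLeg N A} {u u' v v' : Fin N → A}

theorem add_left (h : IsExchange M u v) (h' : IsExchange M u' v) :
    IsExchange M (u + u') v := by
  have hl : legMul (u + u') v = legMul u v + legMul u' v := funext fun _ => add_mul ..
  have hr : legMulRev (u + u') v = legMulRev u v + legMulRev u' v := funext fun _ => mul_add ..
  rw [IsExchange, hl, hr, h, h', mulVec_add]

theorem add_right (h : IsExchange M u v) (h' : IsExchange M u v') :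
    IsExchange M u (v + v') := by
  have hl : legMul u (v + v') = legMul u v + legMul u v' := funext fun _ => mul_add ..
  have hr : legMulRev u (v + v') = legMulRev u v + legMulRev u v' := funext fun _ => add_mul ..
  rw [IsExchange, hl, hr, h, h', mulVec_add]

variable {S : Type*} [Monoid S] [DistribMulAction S A] [IsScalarTower S A A] [SMulCommClass S A A]

theorem smul_left (h : IsExchange M u v) (c : S) : IsExchange M (c • u) v := by
  have hl : legMul (c • u) v = c • legMul u v := funext fun _ => smul_mul_assoc ..
  have hr : legMulRev (c • u) v = c • legMulRev u v := funext fun _ => mul_smul_comm ..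
  rw [IsExchange, hl, hr, h, mulVec_smul]

theorem smul_right (h : IsExchange M u v) (c : S) : IsExchange M u (c • v) := by
  have hl : legMul u (c • v) = c • legMul u v := funext fun _ => mul_smul_comm ..
  have hr : legMulRev u (c • v) = c • legMulRev u v := funext fun _ => smul_mul_assoc ..
  rw [IsExchange, hl, hr, h, mulVec_smul]

end IsExchange

theorem leg1_mulVec_legMul (M : Matrix (Fin N) (Fin N) A) (u v : Fin N → A) :
    leg1 M *ᵥ legMul u v = legMul (M *ᵥ u) v := by
  funext p
  simp [mulVec, dotProduct, leg1, legMul, Fintype.sum_prod_type, ite_mul, Finset.sum_mul,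
    mul_assoc]

theorem leg2_mulVec_legMulRev (M : Matrix (Fin N) (Fin N) A) (u v : Fin N → A) :
    leg2 M *ᵥ legMulRev u v = legMulRev u (M *ᵥ v) := by
  funext p
  simp [mulVec, dotProduct, leg2, legMulRev, Fintype.sum_prod_type, ite_mul, Finset.sum_mul,
    mul_assoc]

theorem legMul_mulVec_right {u : Fin N → A} {M : Matrix (Fin N) (Fin N) A} {W : TwoLeg N A}
    (hW : ∀ i m n, u i * M m n = ∑ r, W (i, m) (r, n) * u r) (v : Fin N → A) :
    legMul u (M *ᵥ v) = W *ᵥ legMul u v := by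
  funext p
  simp only [legMul, mulVec, dotProduct, Finset.mul_sum, ← mul_assoc, hW, Finset.sum_mul,
    Fintype.sum_prod_type]
  exact Finset.sum_comm

theorem legMulRev_mulVec_left {v : Fin N → A} {M : Matrix (Fin N) (Fin N) A} {W : TwoLeg N A}
    (hW : ∀ i j m, v j * M i m = ∑ r, W (i, j) (m, r) * v r) (u : Fin N → A) :
    legMulRev (M *ᵥ u) v = W *ᵥ legMulRev u v := by
  funext p
  simp only [legMulRev, mulVec, dotProduct, Finset.mul_sum, ← mul_assoc, hW, Finset.sum_mul,
    Fintype.sum_prod_type]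

end LegProducts

section ScalarMatrices

variable {N : ℕ}

theorem flipM_mul {α : Type*} [NonUnitalNonAssocSemiring α] (M M' : TwoLeg N α) :
    flipM (M * M') = flipM M * flipM M' :=
  (Matrix.submatrix_mul_equiv M M' _ (Equiv.prodComm _ _) _).symm

theorem flipM_one {α : Type*} [MulZeroOneClass α] : flipM (1 : TwoLeg N α) = 1 :=
  Matrix.submatrix_one_equiv (Equiv.prodComm _ _)

@[simp]
theorem flipM_flipM {α : Type*} (M : TwoLeg N α) : flipM (flipM M) = M := rfl

variable (A : Type*) [Ring A] [Algebra ℂ A]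

theorem cmap_mul (M M' : TwoLeg N ℂ) : cmap A (M * M') = cmap A M * cmap A M' :=
  Matrix.map_mul

theorem cmap_one : cmap A (1 : TwoLeg N ℂ) = 1 :=
  Matrix.map_one _ (map_zero _) (map_one _)

variable {A}

theorem cmap_mul_leg1_mul_cmap_apply (P Q : TwoLeg N ℂ) (B : Matrix (Fin N) (Fin N) A)
    (p q : Fin N × Fin N) :
    (cmap A P * leg1 B * cmap A Q) p q =
      ∑ j, ∑ m₁, ∑ m₂, (P p (m₁, j) * Q (m₂, j) q) • B m₁ m₂ := by
  simp only [cmap, leg1, Matrix.mul_apply, map_apply, of_apply, mul_ite, mul_zero,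
    Fintype.sum_prod_type, Finset.sum_ite_eq', Finset.mem_univ, ↓reduceIte, Finset.sum_mul,
    mul_assoc, Algebra.smul_def, map_mul]
  rw [Finset.sum_comm]
  refine Finset.sum_congr rfl fun j _ => ?_
  rw [Finset.sum_comm]
  simp only [Algebra.commutes]

theorem cmap_mul_leg2_mul_cmap_apply (P Q : TwoLeg N ℂ) (B : Matrix (Fin N) (Fin N) A)
    (p q : Fin N × Fin N) :
    (cmap A P * leg2 B * cmap A Q) p q =
      ∑ i, ∑ m₁, ∑ m₂, (P p (i, m₁) * Q (i, m₂) q) • B m₁ m₂ := by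
  simp only [cmap, leg2, Matrix.mul_apply, map_apply, of_apply, mul_ite, mul_zero,
    Fintype.sum_prod_type, Finset.sum_ite_irrel, Finset.sum_const_zero, Finset.sum_ite_eq',
    Finset.mem_univ, ↓reduceIte, Finset.sum_mul, mul_assoc, Algebra.smul_def, map_mul]
  refine Finset.sum_congr rfl fun i _ => ?_
  rw [Finset.sum_comm]
  simp only [Algebra.commutes]

theorem isExchange_cmap_iff {M : TwoLeg N ℂ} {u v : Fin N → A} :
    IsExchange (cmap A M) u v ↔
      ∀ i j, u i * v j = ∑ i', ∑ j', M (i, j) (i', j') • (v j' * u i') := by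
  simp [IsExchange, funext_iff, legMul, legMulRev, mulVec, dotProduct, cmap,
    Fintype.sum_prod_type, Algebra.smul_def]

end ScalarMatrices

section Boundary

variable {N : ℕ} {A : Type*} [Ring A] [Algebra ℂ A] (R : ℝ → ℝ → TwoLeg N ℂ)
  (a : Fin N → ℝ → A) (b : Fin N → Fin N → ℝ → A)

theorem tilA_eq (k : ℝ) :
    (tilA a b · k) = (2⁻¹ : ℂ) • ((a · k) + bmat b k *ᵥ (a · (-k))) := by
  funext i
  simp [tilA, bmat, mulVec, dotProduct]

variable (hunit : ∀ k₁ k₂ : ℝ, R k₁ k₂ * flipM (R k₂ k₁) = 1)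

include hunit in
theorem cmap_mul_cmap_flipM (s t : ℝ) : cmap A (R s t) * cmap A (flipM (R t s)) = 1 := by
  rw [← cmap_mul, hunit, cmap_one]

include hunit in
theorem cmap_flipM_mul_cmap (s t : ℝ) : cmap A (flipM (R t s)) * cmap A (R s t) = 1 := by
  have h := congrArg flipM (hunit t s)
  rw [flipM_mul, flipM_one, flipM_flipM] at h
  rw [← cmap_mul, h, cmap_one]

variable (hab : ∀ (k₁ k₂ : ℝ) (i m n : Fin N),
      a i k₁ * b m n k₂ =
        ∑ i₁ : Fin N, ∑ m₁ : Fin N, ∑ m₂ : Fin N, ∑ i₂ : Fin N,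
          (R k₂ k₁ (m, i) (m₁, i₁) * R k₁ (-k₂) (i₁, m₂) (i₂, n)) •
            (b m₁ m₂ k₂ * a i₂ k₁))

include hab in
theorem legMul_bmat_mulVec (s t : ℝ) (v : Fin N → A) :
    legMul (a · s) (bmat b t *ᵥ v) =
      (cmap A (flipM (R t s)) * leg2 (bmat b t) * cmap A (R s (-t))) *ᵥ legMul (a · s) v := by
  refine legMul_mulVec_right (fun i m n => ?_) v
  rw [show bmat b t m n = b m n t from rfl, hab s t i m n]
  simp only [cmap_mul_leg2_mul_cmap_apply, Finset.sum_mul, smul_mul_assoc]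
  exact (sum_comm_innermost _).symm

include hab in
theorem legMulRev_bmat_mulVec (s t : ℝ) (u : Fin N → A) :
    legMulRev (bmat b s *ᵥ u) (a · t) =
      (cmap A (R s t) * leg1 (bmat b s) * cmap A (flipM (R t (-s)))) *ᵥ
        legMulRev u (a · t) := by
  refine legMulRev_mulVec_left (fun i j m => ?_) u
  rw [show bmat b s i m = b i m s from rfl, hab t s j i m]
  simp only [cmap_mul_leg1_mul_cmap_apply, Finset.sum_mul, smul_mul_assoc]
  exact (sum_comm_innermost _).symm

variable (haa : ∀ (k₁ k₂ : ℝ) (i j : Fin N),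
      a i k₁ * a j k₂ =
        ∑ i' : Fin N, ∑ j' : Fin N,
          R k₂ k₁ (j, i) (j', i') • (a j' k₂ * a i' k₁))

include haa in
theorem isExchange_a_a (s t : ℝ) : IsExchange (cmap A (flipM (R t s))) (a · s) (a · t) :=
  isExchange_cmap_iff.2 (haa s t)

include haa hab hunit in
theorem isExchange_a_ba (s t : ℝ) :
    IsExchange (cmap A (flipM (R t s))) (a · s) (bmat b t *ᵥ (a · (-t))) := by
  rw [IsExchange, legMul_bmat_mulVec R a b hab, isExchange_a_a R a haa s (-t), mulVec_mulVec,
    mul_assoc _ (cmap A (R s (-t))), cmap_mul_cmap_flipM R hunit, mul_one, ← mulVec_mulVec,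
    leg2_mulVec_legMulRev]

include haa hab hunit in
theorem isExchange_ba_a (s t : ℝ) :
    IsExchange (cmap A (flipM (R t s))) (bmat b s *ᵥ (a · (-s))) (a · t) := by
  rw [IsExchange, ← leg1_mulVec_legMul, isExchange_a_a R a haa (-s) t,
    legMulRev_bmat_mulVec R a b hab, mulVec_mulVec, mulVec_mulVec, ← mul_assoc, ← mul_assoc,
    cmap_flipM_mul_cmap R hunit, one_mul]

variable (hrefl : ∀ k₁ k₂ : ℝ,
      cmap A (R k₁ k₂) * leg1 (bmat b k₁) * cmap A (flipM (R k₂ (-k₁))) *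
          leg2 (bmat b k₂) =
        leg2 (bmat b k₂) * cmap A (R k₁ (-k₂)) * leg1 (bmat b k₁) *
          cmap A (flipM (R (-k₂) (-k₁))))

include hunit hrefl in
theorem leg1_mul_cmap_mul_leg2_eq (s t : ℝ) :
    leg1 (bmat b s) * cmap A (flipM (R t (-s))) * leg2 (bmat b t) =
      cmap A (flipM (R t s)) * (leg2 (bmat b t) * cmap A (R s (-t)) * leg1 (bmat b s) *
        cmap A (flipM (R (-t) (-s)))) := by
  rw [← hrefl]
  simp only [← mul_assoc, cmap_flipM_mul_cmap R hunit, one_mul]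

include haa hab hunit hrefl in
theorem isExchange_ba_ba (s t : ℝ) :
    IsExchange (cmap A (flipM (R t s))) (bmat b s *ᵥ (a · (-s))) (bmat b t *ᵥ (a · (-t))) := by
  rw [IsExchange, ← leg1_mulVec_legMul, isExchange_a_ba R a b hunit hab haa (-s) t,
    ← leg2_mulVec_legMulRev, ← leg2_mulVec_legMulRev, legMulRev_bmat_mulVec R a b hab s (-t)]
  simp only [mulVec_mulVec, ← mul_assoc]
  rw [leg1_mul_cmap_mul_leg2_eq R b hunit hrefl]
  simp only [mul_assoc]

end Boundary

/-- given `a₁ a₂ = R₂₁ a₂ a₁`, `a₁ b₂ = R₂₁ b₂ R'₁₂ a₁`, the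
reflection equation for `b`, and unitarity of `R`, the elements
`ã(k) = ½(a(k) + b(k) a(−k))` satisfy `ã₁(k₁) ã₂(k₂) = R₂₁(k₂,k₁) ã₂(k₂) ã₁(k₁)`. -/
theorem tilde_a_exchange {N : ℕ} {A : Type*} [Ring A] [Algebra ℂ A]
    (R : ℝ → ℝ → TwoLeg N ℂ)
    (a : Fin N → ℝ → A) (b : Fin N → Fin N → ℝ → A)
    (hunit : ∀ k₁ k₂ : ℝ, R k₁ k₂ * flipM (R k₂ k₁) = 1)
    (haa : ∀ (k₁ k₂ : ℝ) (i j : Fin N),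
      a i k₁ * a j k₂ =
        ∑ i' : Fin N, ∑ j' : Fin N,
          R k₂ k₁ (j, i) (j', i') • (a j' k₂ * a i' k₁))
    (hab : ∀ (k₁ k₂ : ℝ) (i m n : Fin N),
      a i k₁ * b m n k₂ =
        ∑ i₁ : Fin N, ∑ m₁ : Fin N, ∑ m₂ : Fin N, ∑ i₂ : Fin N,
          (R k₂ k₁ (m, i) (m₁, i₁) * R k₁ (-k₂) (i₁, m₂) (i₂, n)) •
            (b m₁ m₂ k₂ * a i₂ k₁))
    (hrefl : ∀ k₁ k₂ : ℝ,
      cmap A (R k₁ k₂) * leg1 (bmat b k₁) * cmap A (flipM (R k₂ (-k₁))) *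
          leg2 (bmat b k₂) =
        leg2 (bmat b k₂) * cmap A (R k₁ (-k₂)) * leg1 (bmat b k₁) *
          cmap A (flipM (R (-k₂) (-k₁)))) :
    ∀ (k₁ k₂ : ℝ) (i j : Fin N),
      tilA a b i k₁ * tilA a b j k₂ =
        ∑ i' : Fin N, ∑ j' : Fin N,
          R k₂ k₁ (j, i) (j', i') • (tilA a b j' k₂ * tilA a b i' k₁) := by
  intro k₁ k₂
  have hsum : IsExchange (cmap A (flipM (R k₂ k₁))) ((a · k₁) + bmat b k₁ *ᵥ (a · (-k₁)))
      ((a · k₂) + bmat b k₂ *ᵥ (a · (-k₂))) :=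
    ((isExchange_a_a R a haa k₁ k₂).add_right (isExchange_a_ba R a b hunit hab haa k₁ k₂)).add_left
      ((isExchange_ba_a R a b hunit hab haa k₁ k₂).add_right
        (isExchange_ba_ba R a b hunit hab haa hrefl k₁ k₂))
  have htil : IsExchange (cmap A (flipM (R k₂ k₁))) (tilA a b · k₁) (tilA a b · k₂) := by
    rw [tilA_eq, tilA_eq]
    exact (hsum.smul_left _).smul_right _
  exact isExchange_cmap_iff.1 htil
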